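/- Let 0 < α < 1, ω_s = (s+1)^{1-α} - s^{1-α}, and C, τ ≥ 0. Suppose nonnegative reals E_0, E_1, ..., E_N satisfy E_1 ≤ E_0 + τC, and for each k ≥ 1, E_{k+1} ≤ Σ_{s=0}^{k-1} (ω_s - ω_{s+1}) E_{k-s} + ω_k E_0 + τC. Then for each k ≥ 1, E_{k+1} ≤ max(E_0, max_{1≤s≤k} E_s) + τC, and consequently E_k ≤ E_0 + kτC for all k. -/
import Mathlib

theorem convergence_gronwall (α : ℝ) (hα0 : 0 < α) (hα1 : α < 1)
    (C τ : ℝ) (hC : 0 ≤ C) (hτ : 0 ≤ τ)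
    (ω : ℕ → ℝ) (hω : ∀ s, ω s = ((s : ℝ) + 1) ^ (1 - α) - (s : ℝ) ^ (1 - α))
    (E : ℕ → ℝ) (hE : ∀ k, 0 ≤ E k)
    (h1 : E 1 ≤ E 0 + τ * C)
    (hrec : ∀ k, 1 ≤ k →
      E (k + 1) ≤ (∑ s ∈ Finset.range k, (ω s - ω (s + 1)) * E (k - s)) + ω k * E 0 + τ * C) :
    (∀ k (hk : 1 ≤ k),
        E (k + 1) ≤ max (E 0) ((Finset.Icc 1 k).sup' (Finset.nonempty_Icc.mpr hk) E) + τ * C)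
      ∧ (∀ k : ℕ, E k ≤ E 0 + (k : ℝ) * τ * C) := by
  have hp0 : (0:ℝ) < 1 - α := by linarith
  have hp1 : 1 - α < 1 := by linarith
  -- ω 0 = 1
  have hω0 : ω 0 = 1 := by
    rw [hω 0]
    simp [Real.zero_rpow (ne_of_gt hp0)]
  -- ω nonneg
  have hωnn : ∀ s, 0 ≤ ω s := by
    intro s
    rw [hω s]
    have : ((s:ℝ)) ^ (1 - α) ≤ ((s:ℝ) + 1) ^ (1 - α) :=
      Real.rpow_le_rpow (Nat.cast_nonneg s) (by linarith) (le_of_lt hp0)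
    linarith
  -- ω decreasing steps: ω s - ω (s+1) ≥ 0 by concavity
  have hωdec : ∀ s : ℕ, 0 ≤ ω s - ω (s + 1) := by
    intro s
    have hcc := Real.concaveOn_rpow (le_of_lt hp0) (le_of_lt hp1)
    have key := hcc.2 (Set.mem_Ici.mpr (Nat.cast_nonneg s))
      (Set.mem_Ici.mpr (by positivity : (0:ℝ) ≤ (s:ℝ) + 2))
      (by norm_num : (0:ℝ) ≤ (1:ℝ)/2) (by norm_num : (0:ℝ) ≤ (1:ℝ)/2) (by norm_num)
    simp only [smul_eq_mul] at key
    have hmid : (1:ℝ)/2 * (s:ℝ) + 1/2 * ((s:ℝ) + 2) = (s:ℝ) + 1 := by ring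
    rw [hmid] at key
    rw [hω s, hω (s+1)]
    push_cast
    have h2 : ((s:ℝ) + 1 + 1) = (s:ℝ) + 2 := by ring
    rw [h2]
    nlinarith [key]
  -- telescoping
  have htel : ∀ k : ℕ, (∑ s ∈ Finset.range k, (ω s - ω (s + 1))) = ω 0 - ω k := by
    intro k
    exact Finset.sum_range_sub' ω k
  -- Part 1
  have part1 : ∀ k (hk : 1 ≤ k),
      E (k + 1) ≤ max (E 0) ((Finset.Icc 1 k).sup' (Finset.nonempty_Icc.mpr hk) E) + τ * C := by
    intro k hk
    set M := max (E 0) ((Finset.Icc 1 k).sup' (Finset.nonempty_Icc.mpr hk) E) with hM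
    have hE0M : E 0 ≤ M := le_max_left _ _
    have hEsM : ∀ s ∈ Finset.range k, E (k - s) ≤ M := by
      intro s hs
      rw [Finset.mem_range] at hs
      have hmem : k - s ∈ Finset.Icc 1 k := by
        rw [Finset.mem_Icc]
        omega
      exact le_trans (Finset.le_sup' E hmem) (le_max_right _ _)
    have hsum : (∑ s ∈ Finset.range k, (ω s - ω (s + 1)) * E (k - s))
        ≤ ∑ s ∈ Finset.range k, (ω s - ω (s + 1)) * M := by
      apply Finset.sum_le_sum
      intro s hs
      exact mul_le_mul_of_nonneg_left (hEsM s hs) (hωdec s)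
    rw [← Finset.sum_mul, htel k, hω0] at hsum
    have := hrec k hk
    have hωk := hωnn k
    nlinarith [this, hsum]
  refine ⟨part1, ?_⟩
  -- Part 2 by strong induction
  intro k
  induction k using Nat.strong_induction_on with
  | _ k ih =>
    match k with
    | 0 => simp
    | 1 =>
      have : (1:ℝ) * τ * C = τ * C := by ring
      rw [Nat.cast_one, this]
      exact h1
    | (m + 2) =>
      have hm1 : 1 ≤ m + 1 := by omega
      have hstep := part1 (m + 1) hm1
      have hMle : max (E 0) ((Finset.Icc 1 (m+1)).sup' (Finset.nonempty_Icc.mpr hm1) E)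
          ≤ E 0 + ((m:ℝ) + 1) * τ * C := by
        apply max_le
        · have : (0:ℝ) ≤ ((m:ℝ) + 1) * τ * C :=
            mul_nonneg (mul_nonneg (by positivity) hτ) hC
          linarith
        · apply Finset.sup'_le
          intro s hs
          rw [Finset.mem_Icc] at hs
          have := ih s (by omega)
          have hcast : (s:ℝ) ≤ (m:ℝ) + 1 := by exact_mod_cast hs.2
          have h2 : (s:ℝ) * τ * C ≤ ((m:ℝ) + 1) * τ * C :=
            mul_le_mul_of_nonneg_right (mul_le_mul_of_nonneg_right hcast hτ) hC
          linarith
      push_cast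
      nlinarith [hstep, hMle, hτ, hC]
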